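/- Let L ⊆ ℂ²ⁿ be a positive Lagrangian subspace with associated Ω-compatible complex structure J_L (so L = ker P_{J_L}), and let S ∈ Sp(2n,ℂ) be such that SL is also positive Lagrangian, with associated complex structure J_{SL}. Then the real matrix A := Re S − (Im S) J_L is invertible and J_{SL} = A J_L A⁻¹; moreover G_{SL} := Ω J_{SL} satisfies G_{SL} = Ω A Ωᵀ G_L (A)⁻¹ where G_L = Ω J_L. -/

import Mathlib

open Matrix

noncomputable section

/-- The standard symplectic matrix `Ω = [[0, −I],[I, 0]]` on `ℝ²ⁿ`. -/
def Omg (n : ℕ) : Matrix (Fin n ⊕ Fin n) (Fin n ⊕ Fin n) ℝ :=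
  fromBlocks 0 (-1) 1 0

/-- The complexification of `Ω`. -/
def OmgC (n : ℕ) : Matrix (Fin n ⊕ Fin n) (Fin n ⊕ Fin n) ℂ :=
  (Omg n).map Complex.ofReal

/-- Componentwise real part of a complex matrix. -/
def matRe {m k : Type*} (A : Matrix m k ℂ) : Matrix m k ℝ := A.map Complex.re

/-- Componentwise imaginary part of a complex matrix. -/
def matIm {m k : Type*} (A : Matrix m k ℂ) : Matrix m k ℝ := A.map Complex.im

/-- Componentwise real part of a complex vector. -/
def vecRe {m : Type*} (z : m → ℂ) : m → ℝ := fun i => (z i).re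

/-- Componentwise imaginary part of a complex vector. -/
def vecIm {m : Type*} (z : m → ℂ) : m → ℝ := fun i => (z i).im

/-- The projection `P_J(z) = Re z + J Im z` from `ℂ²ⁿ` to `ℝ²ⁿ`. -/
def PJ {n : ℕ} (J : Matrix (Fin n ⊕ Fin n) (Fin n ⊕ Fin n) ℝ)
    (z : Fin n ⊕ Fin n → ℂ) : Fin n ⊕ Fin n → ℝ :=
  vecRe z + J *ᵥ vecIm z

/-!
`ker P_J` is parametrised by `v ↦ -J v + i v`, `v ∈ ℝ²ⁿ`. Applying `S` to such a vector gives
imaginary part `A v` and, because `J_L² = -1`, real part `-A J_L v`. These images lie in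
`ker P_{J_{SL}}`, i.e. `J_{SL} A v = A J_L v` for all `v`. If `A v = 0`, then also `A J_L v = 0`,
so `S` kills `-J_L v + i v`; a complex symplectic matrix is invertible, hence `v = 0`. The formula
for `G_{SL}` then follows from `ΩᵀΩ = 1`.
-/

theorem isUnit_of_transpose_mul_mul_eq {m R : Type*} [Fintype m] [DecidableEq m] [CommRing R]
    {M S : Matrix m m R} (hM : IsUnit M.det) (h : Sᵀ * M * S = M) : IsUnit S := by
  have hdet : S.det * S.det * M.det = 1 * M.det := by
    simpa [det_mul, det_transpose, mul_right_comm] using congrArg det h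
  rw [isUnit_iff_isUnit_det]
  exact IsUnit.of_mul_eq_one _ (hM.mul_left_injective hdet)

theorem Omg_transpose_mul_Omg (n : ℕ) : (Omg n)ᵀ * Omg n = 1 := by
  rw [Omg, fromBlocks_transpose, fromBlocks_multiply, ← fromBlocks_one]
  simp

theorem isUnit_det_OmgC (n : ℕ) : IsUnit (OmgC n).det := by
  refine isUnit_det_of_left_inverse (B := (OmgC n)ᵀ) ?_
  change (Omg n)ᵀ.map Complex.ofRealHom * (Omg n).map Complex.ofRealHom = 1
  rw [← Matrix.map_mul, Omg_transpose_mul_Omg, Matrix.map_one _ (map_zero _) (map_one _)]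

section RealImag

variable {m : Type*} [Fintype m]

theorem vecRe_mulVec (M : Matrix m m ℂ) (z : m → ℂ) :
    vecRe (M *ᵥ z) = matRe M *ᵥ vecRe z - matIm M *ᵥ vecIm z := by
  funext i
  simp [vecRe, vecIm, matRe, matIm, mulVec, dotProduct, Complex.re_sum,
    Complex.mul_re, Finset.sum_sub_distrib]

theorem vecIm_mulVec (M : Matrix m m ℂ) (z : m → ℂ) :
    vecIm (M *ᵥ z) = matRe M *ᵥ vecIm z + matIm M *ᵥ vecRe z := by
  funext i
  simp [vecRe, vecIm, matRe, matIm, mulVec, dotProduct, Complex.im_sum,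
    Complex.mul_im, Finset.sum_add_distrib]

theorem matRe_sub_matIm_mul_mul_self [DecidableEq m] (S : Matrix m m ℂ) {J : Matrix m m ℝ}
    (hJ : J * J = -1) :
    (matRe S - matIm S * J) * J = matRe S * J + matIm S := by
  rw [sub_mul, mul_assoc, hJ, mul_neg, mul_one, sub_neg_eq_add]

def kerPJParam (J : Matrix m m ℝ) (v : m → ℝ) : m → ℂ := fun i => ⟨-(J *ᵥ v) i, v i⟩

variable (S : Matrix m m ℂ) (J : Matrix m m ℝ) (v : m → ℝ)

theorem vecRe_kerPJParam : vecRe (kerPJParam J v) = -(J *ᵥ v) := rfl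

theorem vecIm_kerPJParam : vecIm (kerPJParam J v) = v := rfl

theorem vecRe_mulVec_kerPJParam :
    vecRe (S *ᵥ kerPJParam J v) = -((matRe S * J + matIm S) *ᵥ v) := by
  rw [vecRe_mulVec, vecRe_kerPJParam, vecIm_kerPJParam, add_mulVec, ← mulVec_mulVec,
    mulVec_neg]
  abel

theorem vecIm_mulVec_kerPJParam :
    vecIm (S *ᵥ kerPJParam J v) = (matRe S - matIm S * J) *ᵥ v := by
  rw [vecIm_mulVec, vecRe_kerPJParam, vecIm_kerPJParam, sub_mulVec, ← mulVec_mulVec,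
    mulVec_neg]
  abel

end RealImag

section Lagrangian

variable {n : ℕ} {J J' : Matrix (Fin n ⊕ Fin n) (Fin n ⊕ Fin n) ℝ}
  {S : Matrix (Fin n ⊕ Fin n) (Fin n ⊕ Fin n) ℂ}

theorem PJ_kerPJParam (v : Fin n ⊕ Fin n → ℝ) : PJ J (kerPJParam J v) = 0 := by
  rw [PJ, vecRe_kerPJParam, vecIm_kerPJParam, neg_add_cancel]

theorem mul_matRe_sub_matIm_mul_eq (hJ : J * J = -1)
    (hS : ∀ w, PJ J w = 0 → PJ J' (S *ᵥ w) = 0) :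
    J' * (matRe S - matIm S * J) = (matRe S - matIm S * J) * J := by
  refine ext_of_mulVec_single fun i => ?_
  have h := hS _ (PJ_kerPJParam (Pi.single i 1))
  rw [PJ, vecRe_mulVec_kerPJParam, vecIm_mulVec_kerPJParam, mulVec_mulVec,
    ← matRe_sub_matIm_mul_mul_self S hJ, neg_add_eq_zero] at h
  exact h.symm

theorem isUnit_matRe_sub_matIm_mul (hJ : J * J = -1) (hS : IsUnit S)
    (hJ' : J' * (matRe S - matIm S * J) = (matRe S - matIm S * J) * J) :
    IsUnit (matRe S - matIm S * J) := by
  set A := matRe S - matIm S * J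
  refine mulVec_injective_iff_isUnit.1 ?_
  rw [← coe_mulVecLin, injective_iff_map_eq_zero]
  intro v hAv
  rw [coe_mulVecLin] at hAv
  have hre : vecRe (S *ᵥ kerPJParam J v) = 0 := by
    rw [vecRe_mulVec_kerPJParam, ← matRe_sub_matIm_mul_mul_self S hJ, ← hJ', ← mulVec_mulVec,
      hAv, mulVec_zero, neg_zero]
  have him : vecIm (S *ᵥ kerPJParam J v) = 0 := by rw [vecIm_mulVec_kerPJParam, hAv]
  have hSw : S *ᵥ kerPJParam J v = S *ᵥ 0 := by
    rw [mulVec_zero]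
    funext i
    exact Complex.ext (congrFun hre i) (congrFun him i)
  rw [← vecIm_kerPJParam J v, mulVec_injective_iff_isUnit.2 hS hSw]
  rfl

end Lagrangian

theorem statement12_general (n : ℕ) (JL JSL : Matrix (Fin n ⊕ Fin n) (Fin n ⊕ Fin n) ℝ)
    (hJL : JLᵀ * Omg n * JL = Omg n ∧ JL * JL = -1 ∧ (Omg n * JL).PosDef)
    (S : Matrix (Fin n ⊕ Fin n) (Fin n ⊕ Fin n) ℂ)
    (hSsymp : Sᵀ * OmgC n * S = OmgC n)
    (hSL : ∀ z : Fin n ⊕ Fin n → ℂ,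
      (∃ w : Fin n ⊕ Fin n → ℂ, PJ JL w = 0 ∧ z = S *ᵥ w) ↔ PJ JSL z = 0) :
    IsUnit (matRe S - matIm S * JL) ∧
    JSL = (matRe S - matIm S * JL) * JL * (matRe S - matIm S * JL)⁻¹ ∧
    Omg n * JSL =
      Omg n * (matRe S - matIm S * JL) * (Omg n)ᵀ * (Omg n * JL) *
        (matRe S - matIm S * JL)⁻¹ := by
  set A := matRe S - matIm S * JL
  have hJL2 : JL * JL = -1 := hJL.2.1
  have hS : IsUnit S := isUnit_of_transpose_mul_mul_eq (isUnit_det_OmgC n) hSsymp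
  have hAJ : JSL * A = A * JL :=
    mul_matRe_sub_matIm_mul_eq hJL2 fun w hw => (hSL _).1 ⟨w, hw, rfl⟩
  have hA : IsUnit A := isUnit_matRe_sub_matIm_mul hJL2 hS hAJ
  have hJSL : JSL = A * JL * A⁻¹ := by
    rw [← hAJ, mul_nonsing_inv_cancel_right _ _ ((isUnit_iff_isUnit_det A).1 hA)]
  refine ⟨hA, hJSL, ?_⟩
  rw [hJSL, mul_assoc (Omg n * A), ← mul_assoc (Omg n)ᵀ, Omg_transpose_mul_Omg, one_mul]
  simp only [mul_assoc]

/-- Let `L = ker P_{J_L}` be a positive Lagrangian subspace with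
associated `Ω`-compatible complex structure `J_L`, and let `S ∈ Sp(2n,ℂ)` be such that
`SL` is positive Lagrangian with associated complex structure `J_{SL}`. Then
`A := Re S − (Im S) J_L` is invertible, `J_{SL} = A J_L A⁻¹`, and with `G_L = ΩJ_L`,
`G_{SL} := ΩJ_{SL}` one has `G_{SL} = ΩAΩᵀ G_L A⁻¹`. -/
theorem statement12 (n : ℕ) (JL JSL : Matrix (Fin n ⊕ Fin n) (Fin n ⊕ Fin n) ℝ)
    (hJL : JLᵀ * Omg n * JL = Omg n ∧ JL * JL = -1 ∧ (Omg n * JL).PosDef)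
    (hJSL : JSLᵀ * Omg n * JSL = Omg n ∧ JSL * JSL = -1 ∧ (Omg n * JSL).PosDef)
    (S : Matrix (Fin n ⊕ Fin n) (Fin n ⊕ Fin n) ℂ)
    (hSsymp : Sᵀ * OmgC n * S = OmgC n)
    (hSL : ∀ z : Fin n ⊕ Fin n → ℂ,
      (∃ w : Fin n ⊕ Fin n → ℂ, PJ JL w = 0 ∧ z = S *ᵥ w) ↔ PJ JSL z = 0) :
    IsUnit (matRe S - matIm S * JL) ∧
    JSL = (matRe S - matIm S * JL) * JL * (matRe S - matIm S * JL)⁻¹ ∧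
    Omg n * JSL =
      Omg n * (matRe S - matIm S * JL) * (Omg n)ᵀ * (Omg n * JL) *
        (matRe S - matIm S * JL)⁻¹ :=
  statement12_general n JL JSL hJL S hSsymp hSL
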